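/- arXiv:2406.15532 — 4 statements merged into one kernel-verified Lean document; each statement's English description precedes it below -/
import Mathlib

section
/- Let G be a nontrivial additive subgroup of ℂ. Then every transposed Poisson structure on the deformed generalized Heisenberg–Virasoro algebra g(G,1) is trivial: any commutative associative bilinear multiplication · on g(G,1) satisfying 2 z·[x,y] = [z·x, y] + [x, z·y] for all x, y, z is identically zero. -/
/-!
Writing `I_a = L_a ⊗ ε` and `C_LI = C_L ⊗ ε`, the algebra `g(G, 1)` is the centrally extended
Witt algebra `Vir_G` tensored with the dual numbers `ℂ[ε]/(ε²)`, and its ½-derivations are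
exactly the multiplications by `λ + μ ε`. To see this, read the ½-derivation identity for the
pairs `(L_a, L_b)` and `(L_a, I_b)` coordinatewise. At the `L`- and `I`-coordinates it forces
the matrix of `φ` to be a translate of the row of `φ(L_0)`; at the central coordinates the
cocycle `(a³ - a)/12` then forces that row to be supported at `0`.

In a transposed Poisson structure every `z · -` is a ½-derivation, so `z · - = λ_z + μ_z ε`.
Comparing `L_0 · C_L = λ_{L_0} C_L + μ_{L_0} C_LI` with
`C_L · L_0 = λ_{C_L} L_0 + μ_{C_L} I_0` gives `C_L · - = 0`; then
`z · C_L = λ_z C_L + μ_z C_LI` vanishes, so `z · - = 0` for every `z`.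
-/

open scoped Classical

/-- Index set for the basis of the deformed generalized Heisenberg–Virasoro
algebra `g(G, 1)`: vectors `L a`, `I a` for `a ∈ G` together with the two
central elements `C_L` and `C_LI`. -/
inductive DGHV1Idx (G : AddSubgroup ℂ) : Type
  | L : G → DGHV1Idx G
  | I : G → DGHV1Idx G
  | CL : DGHV1Idx G
  | CLI : DGHV1Idx G

theorem Module.Basis.repr_apply_eq_mul_of_forall {ι R M : Type*} [CommSemiring R]
    [AddCommMonoid M] [Module R M] (b : Module.Basis ι R M) (f : M →ₗ[R] M) {j j' : ι} {c : R}
    (h : ∀ i, b.repr (f (b i)) j = c * b.repr (b i) j') (x : M) :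
    b.repr (f x) j = c * b.repr x j' := by
  have key : Finsupp.lapply j ∘ₗ b.repr.toLinearMap ∘ₗ f =
      c • (Finsupp.lapply j' ∘ₗ b.repr.toLinearMap) := b.ext h
  exact LinearMap.congr_fun key x

def IsHalfDerivation {R L : Type*} [CommRing R] [LieRing L] [LieAlgebra R L]
    (φ : L →ₗ[R] L) : Prop :=
  ∀ x y : L, (2 : R) • φ ⁅x, y⁆ = ⁅φ x, y⁆ + ⁅x, φ y⁆

theorem IsHalfDerivation.lie_apply_eq_zero {R L : Type*} [CommRing R] [LieRing L]
    [LieAlgebra R L] {φ : L →ₗ[R] L} (hφ : IsHalfDerivation φ) {z : L}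
    (hz : ∀ y : L, ⁅z, y⁆ = 0) (y : L) : ⁅φ z, y⁆ = 0 := by
  have h := hφ z y
  rwa [hz, hz, map_zero, smul_zero, add_zero, eq_comm] at h

theorem IsHalfDerivation.two_mul_repr {ι R L : Type*} [CommRing R] [LieRing L] [LieAlgebra R L]
    {φ : L →ₗ[R] L} (hφ : IsHalfDerivation φ) (b : Module.Basis ι R L) (x y : L) (j : ι) :
    2 * b.repr (φ ⁅x, y⁆) j = b.repr ⁅x, φ y⁆ j - b.repr ⁅y, φ x⁆ j := by
  have h := congrArg (fun v => b.repr v j) (hφ x y)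
  simp only [← lie_skew (φ x) y, map_smul, map_add, map_neg, Finsupp.smul_apply,
    Finsupp.add_apply, Finsupp.neg_apply, smul_eq_mul] at h
  linear_combination h

theorem AddSubgroup.exists_coe_notMem_finset {K : Type*} [Field K] [CharZero K]
    (G : AddSubgroup K) [Nontrivial G] (t : Finset K) : ∃ a : G, (a : K) ∉ t := by
  obtain ⟨a₀, ha₀⟩ := exists_ne (0 : G)
  have ha₀' : (a₀ : K) ≠ 0 := by simpa using ha₀
  have hinf : (G : Set K).Infinite :=
    Set.infinite_of_injective_forall_mem (f := fun n : ℕ => (n : K) * a₀)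
      (fun m n h => by simpa [ha₀'] using h)
      (fun n => by simpa [← nsmul_eq_mul] using G.nsmul_mem a₀.2 n)
  obtain ⟨a, ha, hat⟩ := hinf.exists_notMem_finset t
  exact ⟨⟨a, ha⟩, hat⟩

/- In this namespace `f b c` stands for the `c`-th coordinate of `φ (e_b)`, and the hypotheses
are the ½-derivation identity for a pair `(L_a, e_b)` read off at a single coordinate. -/
namespace DGHV

variable {K : Type*} [Field K] {G : AddSubgroup K}

theorem shift_invariant_of_ne {f h : G → G → K} {g : G → K}
    (hfe : ∀ a b c : G, 2 * ((b : K) - a) * f (a + b) c =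
      (2 * b - c) * h a (c - b) + (c - 2 * a) * f b (c - a))
    (h0 : ∀ c, h 0 c = g c) {b c : G} (hc : (c : K) ≠ 2 * b) : f b c = g (c - b) := by
  have key := hfe 0 b c
  simp only [zero_add, sub_zero, ZeroMemClass.coe_zero, mul_zero, h0] at key
  have : (2 * (b : K) - c) * (f b c - g (c - b)) = 0 := by linear_combination key
  exact sub_eq_zero.mp ((mul_eq_zero.mp this).resolve_left (sub_ne_zero.mpr hc.symm))

theorem shift_invariant [CharZero K] [Nontrivial G] {f h : G → G → K} {g : G → K}
    (hfe : ∀ a b c : G, 2 * ((b : K) - a) * f (a + b) c =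
      (2 * b - c) * h a (c - b) + (c - 2 * a) * f b (c - a))
    (h0 : ∀ c, h 0 c = g c) (hh : ∀ a c : G, (c : K) ≠ 2 * a → h a c = g (c - a))
    (b c : G) : f b c = g (c - b) := by
  -- at `(t, b, c + t)` with `t` generic, the other two terms are known from `hh` and from `a = 0`
  obtain ⟨t, ht⟩ := G.exists_coe_notMem_finset {(c : K), (c : K) - b, (c : K) - 2 * b}
  simp only [Finset.mem_insert, Finset.mem_singleton, not_or] at ht
  obtain ⟨htc, htcb, htcb2⟩ := ht
  have key := hfe t b (c + t)
  rw [shift_invariant_of_ne hfe h0 (b := t + b) (c := c + t)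
      (by push_cast; contrapose! htcb2; linear_combination -htcb2),
    hh t (c + t - b) (by push_cast; contrapose! htcb; linear_combination -htcb),
    show c + t - (t + b) = c - b by abel, show c + t - b - t = c - b by abel,
    show c + t - t = c by abel] at key
  push_cast at key
  have : ((c : K) - t) * (f b c - g (c - b)) = 0 := by linear_combination -key
  exact sub_eq_zero.mp ((mul_eq_zero.mp this).resolve_left (sub_ne_zero.mpr (Ne.symm htc)))

theorem eq_zero_of_forall_mul_eq_cube_sub_mul [CharZero K] [Nontrivial G] {x y : K}
    (h : ∀ u : G, (u : K) * x = ((u : K) ^ 3 - u) * y) : x = 0 ∧ y = 0 := by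
  obtain ⟨u, hu⟩ := exists_ne (0 : G)
  have hu' : (u : K) ≠ 0 := by simpa using hu
  have h1 := h u
  have h2 := h (u + u)
  push_cast at h2
  have hy : y = 0 := by
    have : (6 * (u : K) ^ 3) * y = 0 := by linear_combination 2 * h1 - h2
    exact (mul_eq_zero.mp this).resolve_left (mul_ne_zero (by norm_num) (pow_ne_zero 3 hu'))
  refine ⟨?_, hy⟩
  subst hy
  simpa [hu'] using h1

theorem central_column_of_ne_zero [CharZero K] [Nontrivial G] {F g : G → K} {γ : K}
    (hfe : ∀ a b : G, 2 * (((b : K) - a) * F (a + b) +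
        (if a + b = 0 then ((a : K) ^ 3 - a) / 12 else 0) * γ) =
      ((b : K) - b ^ 3 + (a ^ 3 - a)) / 12 * g (-(a + b)))
    {s : G} (hs : s ≠ 0) : g (-s) = 0 ∧ F s = 0 := by
  have hs' : (s : K) ≠ 0 := by simpa using hs
  have h₀ : 2 * (s : K) * F s = ((s : K) - s ^ 3) / 12 * g (-s) := by
    have h := hfe 0 s
    simp only [zero_add, if_neg hs, ZeroMemClass.coe_zero] at h
    linear_combination h
  -- comparing the splittings `s = 0 + s` and `s = a + (s - a)` leaves `a b (b - a) s g(-s) = 0`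
  have hg : g (-s) = 0 := by
    obtain ⟨a, ha⟩ := G.exists_coe_notMem_finset {0, (s : K), (s : K) / 2}
    simp only [Finset.mem_insert, Finset.mem_singleton, not_or] at ha
    obtain ⟨ha0, has, has2⟩ := ha
    have h := hfe a (s - a)
    simp only [add_sub_cancel, if_neg hs] at h
    push_cast at h
    have key : (a * (s - a) * (s - 2 * a) * s / 12 : K) * g (-s) = 0 := by
      linear_combination (s - 2 * (a : K)) * h₀ - s * h
    refine (mul_eq_zero.mp key).resolve_left ?_
    have h2 : (s : K) - 2 * a ≠ 0 := by contrapose! has2; linear_combination -has2 / 2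
    have h3 : (s : K) - a ≠ 0 := sub_ne_zero.mpr (Ne.symm has)
    simp [ha0, h2, h3, hs']
  refine ⟨hg, ?_⟩
  rw [hg, mul_zero] at h₀
  simpa [hs] using h₀

theorem central_column [CharZero K] [Nontrivial G] {F g : G → K} {γ : K}
    (hfe : ∀ a b : G, 2 * (((b : K) - a) * F (a + b) +
        (if a + b = 0 then ((a : K) ^ 3 - a) / 12 else 0) * γ) =
      ((b : K) - b ^ 3 + (a ^ 3 - a)) / 12 * g (-(a + b))) :
    (∀ e, e ≠ 0 → g e = 0) ∧ (∀ s, F s = 0) ∧ γ = g 0 := by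
  obtain ⟨hF0, hγ⟩ :=
    eq_zero_of_forall_mul_eq_cube_sub_mul (G := G) (x := 24 * F 0) (y := γ - g 0) fun u => by
      have h := hfe u (-u)
      simp only [add_neg_cancel, if_true, neg_zero, AddSubgroup.coe_neg] at h
      linear_combination -6 * h
  refine ⟨fun e he => by simpa using (central_column_of_ne_zero hfe (neg_ne_zero.mpr he)).1,
    fun s => ?_, sub_eq_zero.mp hγ⟩
  by_cases hs : s = 0
  · subst hs
    simpa using hF0
  · exact (central_column_of_ne_zero hfe hs).2

end DGHV

section

open DGHV1Idx

variable {G : AddSubgroup ℂ} {Lg : Type*} [LieRing Lg] [LieAlgebra ℂ Lg]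

structure IsDGHVBasis (bas : Module.Basis (DGHV1Idx G) ℂ Lg) : Prop where
  lie_L_L : ∀ a b : G, ⁅bas (L a), bas (L b)⁆ =
    ((b : ℂ) - (a : ℂ)) • bas (L (a + b)) +
      (if a + b = 0 then ((a : ℂ) ^ 3 - (a : ℂ)) / 12 else 0) • bas CL
  lie_L_I : ∀ a b : G, ⁅bas (L a), bas (I b)⁆ =
    ((b : ℂ) - (a : ℂ)) • bas (I (a + b)) +
      (if a + b = 0 then ((a : ℂ) ^ 3 - (a : ℂ)) / 12 else 0) • bas CLI
  lie_I_I : ∀ a b : G, ⁅bas (I a), bas (I b)⁆ = 0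
  lie_CL : ∀ x : Lg, ⁅bas CL, x⁆ = 0
  lie_CLI : ∀ x : Lg, ⁅bas CLI, x⁆ = 0

/-- Multiplication by `ε` under `g(G, 1) ≅ Vir_G ⊗ ℂ[ε]/(ε²)`. -/
noncomputable def dghvShift (bas : Module.Basis (DGHV1Idx G) ℂ Lg) : Lg →ₗ[ℂ] Lg :=
  bas.constr ℂ fun
    | L a => bas (I a)
    | I _ => 0
    | CL => bas CLI
    | CLI => 0

namespace IsDGHVBasis

variable {bas : Module.Basis (DGHV1Idx G) ℂ Lg}

theorem lie_CL_right (hB : IsDGHVBasis bas) (x : Lg) : ⁅x, bas CL⁆ = 0 := by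
  rw [← lie_skew, hB.lie_CL, neg_zero]

theorem lie_CLI_right (hB : IsDGHVBasis bas) (x : Lg) : ⁅x, bas CLI⁆ = 0 := by
  rw [← lie_skew, hB.lie_CLI, neg_zero]

theorem repr_lie_L_L (hB : IsDGHVBasis bas) (a c : G) (x : Lg) :
    bas.repr ⁅bas (L a), x⁆ (L c) = ((c : ℂ) - 2 * a) * bas.repr x (L (c - a)) := by
  refine bas.repr_apply_eq_mul_of_forall (LieAlgebra.ad ℂ Lg (bas (L a))) (fun i => ?_) x
  rcases i with b | b | _ | _ <;>
    simp only [LieAlgebra.ad_apply, hB.lie_L_L, hB.lie_L_I, hB.lie_CL_right, hB.lie_CLI_right] <;>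
    (try split_ifs) <;> simp [Finsupp.single_apply, eq_sub_iff_add_eq, add_comm] <;>
    (try split_ifs) <;> subst_vars <;> (try push_cast) <;> ring

theorem repr_lie_L_I (hB : IsDGHVBasis bas) (a c : G) (x : Lg) :
    bas.repr ⁅bas (L a), x⁆ (I c) = ((c : ℂ) - 2 * a) * bas.repr x (I (c - a)) := by
  refine bas.repr_apply_eq_mul_of_forall (LieAlgebra.ad ℂ Lg (bas (L a))) (fun i => ?_) x
  rcases i with b | b | _ | _ <;>
    simp only [LieAlgebra.ad_apply, hB.lie_L_L, hB.lie_L_I, hB.lie_CL_right, hB.lie_CLI_right] <;>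
    (try split_ifs) <;> simp [Finsupp.single_apply, eq_sub_iff_add_eq, add_comm] <;>
    (try split_ifs) <;> subst_vars <;> (try push_cast) <;> ring

theorem repr_lie_L_CL (hB : IsDGHVBasis bas) (a : G) (x : Lg) :
    bas.repr ⁅bas (L a), x⁆ CL = ((a : ℂ) ^ 3 - a) / 12 * bas.repr x (L (-a)) := by
  refine bas.repr_apply_eq_mul_of_forall (LieAlgebra.ad ℂ Lg (bas (L a))) (fun i => ?_) x
  rcases i with b | b | _ | _ <;>
    simp only [LieAlgebra.ad_apply, hB.lie_L_L, hB.lie_L_I, hB.lie_CL_right, hB.lie_CLI_right] <;>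
    (try split_ifs) <;> simp_all [Finsupp.single_apply, eq_neg_iff_add_eq_zero, add_comm]

theorem repr_lie_L_CLI (hB : IsDGHVBasis bas) (a : G) (x : Lg) :
    bas.repr ⁅bas (L a), x⁆ CLI = ((a : ℂ) ^ 3 - a) / 12 * bas.repr x (I (-a)) := by
  refine bas.repr_apply_eq_mul_of_forall (LieAlgebra.ad ℂ Lg (bas (L a))) (fun i => ?_) x
  rcases i with b | b | _ | _ <;>
    simp only [LieAlgebra.ad_apply, hB.lie_L_L, hB.lie_L_I, hB.lie_CL_right, hB.lie_CLI_right] <;>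
    (try split_ifs) <;> simp_all [Finsupp.single_apply, eq_neg_iff_add_eq_zero, add_comm]

theorem repr_lie_I_L (hB : IsDGHVBasis bas) (a c : G) (x : Lg) :
    bas.repr ⁅bas (I a), x⁆ (L c) = 0 := by
  simpa using bas.repr_apply_eq_mul_of_forall (LieAlgebra.ad ℂ Lg (bas (I a))) (c := 0)
    (j' := L c) (fun i => by
      rcases i with b | b | _ | _ <;>
        simp only [LieAlgebra.ad_apply, ← lie_skew (bas (I a)) (bas (L _)), hB.lie_L_I,
          hB.lie_I_I, hB.lie_CL_right, hB.lie_CLI_right] <;>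
        (try split_ifs) <;> simp) x

theorem repr_lie_I_I (hB : IsDGHVBasis bas) (a c : G) (x : Lg) :
    bas.repr ⁅bas (I a), x⁆ (I c) = ((c : ℂ) - 2 * a) * bas.repr x (L (c - a)) := by
  refine bas.repr_apply_eq_mul_of_forall (LieAlgebra.ad ℂ Lg (bas (I a))) (fun i => ?_) x
  rcases i with b | b | _ | _ <;>
    simp only [LieAlgebra.ad_apply, ← lie_skew (bas (I a)) (bas (L _)), hB.lie_L_I, hB.lie_I_I,
      hB.lie_CL_right, hB.lie_CLI_right] <;>
    (try split_ifs) <;> simp [Finsupp.single_apply, eq_sub_iff_add_eq, add_comm] <;>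
    (try split_ifs) <;> subst_vars <;> (try push_cast) <;> ring

theorem repr_lie_I_CL (hB : IsDGHVBasis bas) (a : G) (x : Lg) :
    bas.repr ⁅bas (I a), x⁆ CL = 0 := by
  simpa using bas.repr_apply_eq_mul_of_forall (LieAlgebra.ad ℂ Lg (bas (I a))) (c := 0)
    (j' := CL) (fun i => by
      rcases i with b | b | _ | _ <;>
        simp only [LieAlgebra.ad_apply, ← lie_skew (bas (I a)) (bas (L _)), hB.lie_L_I,
          hB.lie_I_I, hB.lie_CL_right, hB.lie_CLI_right] <;>
        (try split_ifs) <;> simp) x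

theorem repr_lie_I_CLI (hB : IsDGHVBasis bas) (a : G) (x : Lg) :
    bas.repr ⁅bas (I a), x⁆ CLI = ((a : ℂ) ^ 3 - a) / 12 * bas.repr x (L (-a)) := by
  refine bas.repr_apply_eq_mul_of_forall (LieAlgebra.ad ℂ Lg (bas (I a))) (fun i => ?_) x
  rcases i with b | b | _ | _ <;>
    simp only [LieAlgebra.ad_apply, ← lie_skew (bas (I a)) (bas (L _)), hB.lie_L_I, hB.lie_I_I,
      hB.lie_CL_right, hB.lie_CLI_right] <;>
    (try split_ifs) <;> simp_all [add_eq_zero_iff_eq_neg]; ring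

theorem repr_eq_zero_of_central [Nontrivial G] (hB : IsDGHVBasis bas) {v : Lg}
    (hv : ∀ y : Lg, ⁅v, y⁆ = 0) (c : G) : bas.repr v (L c) = 0 ∧ bas.repr v (I c) = 0 := by
  obtain ⟨b, hb⟩ := exists_ne c
  have hbc : (c : ℂ) - b ≠ 0 := sub_ne_zero.mpr (by simpa using hb.symm)
  have hvb : ⁅bas (L b), v⁆ = 0 := by rw [← lie_skew, hv, neg_zero]
  have hL := hB.repr_lie_L_L b (c + b) v
  have hI := hB.repr_lie_L_I b (c + b) v
  simp only [hvb, map_zero, Finsupp.coe_zero, Pi.zero_apply, add_sub_cancel_right,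
    AddSubgroup.coe_add] at hL hI
  exact ⟨(mul_eq_zero.mp (by linear_combination -hL)).resolve_left hbc,
    (mul_eq_zero.mp (by linear_combination -hI)).resolve_left hbc⟩

section HalfDerivation

variable {φ : Lg →ₗ[ℂ] Lg}

theorem halfDeriv_LL_L [Nontrivial G] (hB : IsDGHVBasis bas) (hφ : IsHalfDerivation φ)
    (a b c : G) :
    2 * ((b : ℂ) - a) * bas.repr (φ (bas (L (a + b)))) (L c) =
      (2 * b - c) * bas.repr (φ (bas (L a))) (L (c - b)) +
        (c - 2 * a) * bas.repr (φ (bas (L b))) (L (c - a)) := by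
  have h := hφ.two_mul_repr bas (bas (L a)) (bas (L b)) (L c)
  simp only [hB.lie_L_L, map_add, map_smul, Finsupp.add_apply, Finsupp.smul_apply, smul_eq_mul,
    hB.repr_lie_L_L,
    (hB.repr_eq_zero_of_central (hφ.lie_apply_eq_zero hB.lie_CL) c).1] at h
  linear_combination h

theorem halfDeriv_LL_I [Nontrivial G] (hB : IsDGHVBasis bas) (hφ : IsHalfDerivation φ)
    (a b c : G) :
    2 * ((b : ℂ) - a) * bas.repr (φ (bas (L (a + b)))) (I c) =
      (2 * b - c) * bas.repr (φ (bas (L a))) (I (c - b)) +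
        (c - 2 * a) * bas.repr (φ (bas (L b))) (I (c - a)) := by
  have h := hφ.two_mul_repr bas (bas (L a)) (bas (L b)) (I c)
  simp only [hB.lie_L_L, map_add, map_smul, Finsupp.add_apply, Finsupp.smul_apply, smul_eq_mul,
    hB.repr_lie_L_I,
    (hB.repr_eq_zero_of_central (hφ.lie_apply_eq_zero hB.lie_CL) c).2] at h
  linear_combination h

theorem halfDeriv_LL_CL (hB : IsDGHVBasis bas) (hφ : IsHalfDerivation φ) (a b : G) :
    2 * (((b : ℂ) - a) * bas.repr (φ (bas (L (a + b)))) CL +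
        (if a + b = 0 then ((a : ℂ) ^ 3 - a) / 12 else 0) * bas.repr (φ (bas CL)) CL) =
      ((b : ℂ) - b ^ 3) / 12 * bas.repr (φ (bas (L a))) (L (-b)) +
        ((a : ℂ) ^ 3 - a) / 12 * bas.repr (φ (bas (L b))) (L (-a)) := by
  have h := hφ.two_mul_repr bas (bas (L a)) (bas (L b)) CL
  simp only [hB.lie_L_L, map_add, map_smul, Finsupp.add_apply, Finsupp.smul_apply, smul_eq_mul,
    hB.repr_lie_L_CL] at h
  linear_combination h

theorem halfDeriv_LL_CLI (hB : IsDGHVBasis bas) (hφ : IsHalfDerivation φ) (a b : G) :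
    2 * (((b : ℂ) - a) * bas.repr (φ (bas (L (a + b)))) CLI +
        (if a + b = 0 then ((a : ℂ) ^ 3 - a) / 12 else 0) * bas.repr (φ (bas CL)) CLI) =
      ((b : ℂ) - b ^ 3) / 12 * bas.repr (φ (bas (L a))) (I (-b)) +
        ((a : ℂ) ^ 3 - a) / 12 * bas.repr (φ (bas (L b))) (I (-a)) := by
  have h := hφ.two_mul_repr bas (bas (L a)) (bas (L b)) CLI
  simp only [hB.lie_L_L, map_add, map_smul, Finsupp.add_apply, Finsupp.smul_apply, smul_eq_mul,
    hB.repr_lie_L_CLI] at h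
  linear_combination h

theorem halfDeriv_LI_L [Nontrivial G] (hB : IsDGHVBasis bas) (hφ : IsHalfDerivation φ)
    (a b c : G) :
    2 * ((b : ℂ) - a) * bas.repr (φ (bas (I (a + b)))) (L c) =
      (c - 2 * a) * bas.repr (φ (bas (I b))) (L (c - a)) := by
  have h := hφ.two_mul_repr bas (bas (L a)) (bas (I b)) (L c)
  simp only [hB.lie_L_I, map_add, map_smul, Finsupp.add_apply, Finsupp.smul_apply, smul_eq_mul,
    hB.repr_lie_L_L, hB.repr_lie_I_L,
    (hB.repr_eq_zero_of_central (hφ.lie_apply_eq_zero hB.lie_CLI) c).1] at h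
  linear_combination h

theorem halfDeriv_LI_I [Nontrivial G] (hB : IsDGHVBasis bas) (hφ : IsHalfDerivation φ)
    (a b c : G) :
    2 * ((b : ℂ) - a) * bas.repr (φ (bas (I (a + b)))) (I c) =
      (2 * b - c) * bas.repr (φ (bas (L a))) (L (c - b)) +
        (c - 2 * a) * bas.repr (φ (bas (I b))) (I (c - a)) := by
  have h := hφ.two_mul_repr bas (bas (L a)) (bas (I b)) (I c)
  simp only [hB.lie_L_I, map_add, map_smul, Finsupp.add_apply, Finsupp.smul_apply, smul_eq_mul,
    hB.repr_lie_L_I, hB.repr_lie_I_I,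
    (hB.repr_eq_zero_of_central (hφ.lie_apply_eq_zero hB.lie_CLI) c).2] at h
  linear_combination h

theorem halfDeriv_LI_CL (hB : IsDGHVBasis bas) (hφ : IsHalfDerivation φ) (a b : G) :
    2 * (((b : ℂ) - a) * bas.repr (φ (bas (I (a + b)))) CL +
        (if a + b = 0 then ((a : ℂ) ^ 3 - a) / 12 else 0) * bas.repr (φ (bas CLI)) CL) =
      ((a : ℂ) ^ 3 - a) / 12 * bas.repr (φ (bas (I b))) (L (-a)) := by
  have h := hφ.two_mul_repr bas (bas (L a)) (bas (I b)) CL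
  simp only [hB.lie_L_I, map_add, map_smul, Finsupp.add_apply, Finsupp.smul_apply, smul_eq_mul,
    hB.repr_lie_L_CL, hB.repr_lie_I_CL] at h
  linear_combination h

theorem halfDeriv_LI_CLI (hB : IsDGHVBasis bas) (hφ : IsHalfDerivation φ) (a b : G) :
    2 * (((b : ℂ) - a) * bas.repr (φ (bas (I (a + b)))) CLI +
        (if a + b = 0 then ((a : ℂ) ^ 3 - a) / 12 else 0) * bas.repr (φ (bas CLI)) CLI) =
      ((b : ℂ) - b ^ 3) / 12 * bas.repr (φ (bas (L a))) (L (-b)) +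
        ((a : ℂ) ^ 3 - a) / 12 * bas.repr (φ (bas (I b))) (I (-a)) := by
  have h := hφ.two_mul_repr bas (bas (L a)) (bas (I b)) CLI
  simp only [hB.lie_L_I, map_add, map_smul, Finsupp.add_apply, Finsupp.smul_apply, smul_eq_mul,
    hB.repr_lie_L_CLI, hB.repr_lie_I_CLI] at h
  linear_combination h

theorem repr_L_L [Nontrivial G] (hB : IsDGHVBasis bas) (hφ : IsHalfDerivation φ) (b c : G) :
    bas.repr (φ (bas (L b))) (L c) = bas.repr (φ (bas (L 0))) (L (c - b)) := by
  set f : G → G → ℂ := fun b c => bas.repr (φ (bas (L b))) (L c)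
  have hfe : ∀ a b c : G, 2 * ((b : ℂ) - a) * f (a + b) c =
      (2 * b - c) * f a (c - b) + (c - 2 * a) * f b (c - a) := hB.halfDeriv_LL_L hφ
  exact DGHV.shift_invariant hfe (fun _ => rfl)
    (fun _ _ => DGHV.shift_invariant_of_ne hfe fun _ => rfl) b c

theorem repr_L_I [Nontrivial G] (hB : IsDGHVBasis bas) (hφ : IsHalfDerivation φ) (b c : G) :
    bas.repr (φ (bas (L b))) (I c) = bas.repr (φ (bas (L 0))) (I (c - b)) := by
  set f : G → G → ℂ := fun b c => bas.repr (φ (bas (L b))) (I c)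
  have hfe : ∀ a b c : G, 2 * ((b : ℂ) - a) * f (a + b) c =
      (2 * b - c) * f a (c - b) + (c - 2 * a) * f b (c - a) := hB.halfDeriv_LL_I hφ
  exact DGHV.shift_invariant hfe (fun _ => rfl)
    (fun _ _ => DGHV.shift_invariant_of_ne hfe fun _ => rfl) b c

theorem repr_I_L [Nontrivial G] (hB : IsDGHVBasis bas) (hφ : IsHalfDerivation φ) (b c : G) :
    bas.repr (φ (bas (I b))) (L c) = 0 :=
  DGHV.shift_invariant (f := fun b c => bas.repr (φ (bas (I b))) (L c)) (h := fun _ _ => 0)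
    (g := fun _ => 0) (fun a b c => by linear_combination hB.halfDeriv_LI_L hφ a b c)
    (fun _ => rfl) (fun _ _ _ => rfl) b c

theorem repr_I_I [Nontrivial G] (hB : IsDGHVBasis bas) (hφ : IsHalfDerivation φ) (b c : G) :
    bas.repr (φ (bas (I b))) (I c) = bas.repr (φ (bas (L 0))) (L (c - b)) :=
  DGHV.shift_invariant (f := fun b c => bas.repr (φ (bas (I b))) (I c))
    (h := fun a c => bas.repr (φ (bas (L a))) (L c))
    (g := fun c => bas.repr (φ (bas (L 0))) (L c))
    (hB.halfDeriv_LI_I hφ) (fun _ => rfl) (fun a c _ => hB.repr_L_L hφ a c) b c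

theorem column_L_CL [Nontrivial G] (hB : IsDGHVBasis bas) (hφ : IsHalfDerivation φ) :
    (∀ e, e ≠ 0 → bas.repr (φ (bas (L 0))) (L e) = 0) ∧
      (∀ s, bas.repr (φ (bas (L s))) CL = 0) ∧
      bas.repr (φ (bas CL)) CL = bas.repr (φ (bas (L 0))) (L 0) :=
  DGHV.central_column fun a b => by
    rw [hB.halfDeriv_LL_CL hφ, hB.repr_L_L hφ a, hB.repr_L_L hφ b,
      show -b - a = -(a + b) by abel, show -a - b = -(a + b) by abel]
    ring

theorem column_L_CLI [Nontrivial G] (hB : IsDGHVBasis bas) (hφ : IsHalfDerivation φ) :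
    (∀ e, e ≠ 0 → bas.repr (φ (bas (L 0))) (I e) = 0) ∧
      (∀ s, bas.repr (φ (bas (L s))) CLI = 0) ∧
      bas.repr (φ (bas CL)) CLI = bas.repr (φ (bas (L 0))) (I 0) :=
  DGHV.central_column fun a b => by
    rw [hB.halfDeriv_LL_CLI hφ, hB.repr_L_I hφ a, hB.repr_L_I hφ b,
      show -b - a = -(a + b) by abel, show -a - b = -(a + b) by abel]
    ring

theorem column_I_CL [Nontrivial G] (hB : IsDGHVBasis bas) (hφ : IsHalfDerivation φ) :
    (∀ s, bas.repr (φ (bas (I s))) CL = 0) ∧ bas.repr (φ (bas CLI)) CL = 0 :=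
  (DGHV.central_column (F := fun s => bas.repr (φ (bas (I s))) CL) (g := fun _ => 0)
    fun a b => by
    rw [hB.halfDeriv_LI_CL hφ, hB.repr_I_L hφ]
    ring).2

theorem column_I_CLI [Nontrivial G] (hB : IsDGHVBasis bas) (hφ : IsHalfDerivation φ) :
    (∀ s, bas.repr (φ (bas (I s))) CLI = 0) ∧
      bas.repr (φ (bas CLI)) CLI = bas.repr (φ (bas (L 0))) (L 0) :=
  (DGHV.central_column (F := fun s => bas.repr (φ (bas (I s))) CLI)
    (g := fun e => bas.repr (φ (bas (L 0))) (L e)) fun a b => by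
    rw [hB.halfDeriv_LI_CLI hφ, hB.repr_L_L hφ a, hB.repr_I_I hφ b,
      show -b - a = -(a + b) by abel, show -a - b = -(a + b) by abel]
    ring).2

theorem exists_eq_smul_id_add_smul_dghvShift [Nontrivial G] (hB : IsDGHVBasis bas)
    (hφ : IsHalfDerivation φ) :
    ∃ lam mu : ℂ, φ = lam • LinearMap.id + mu • dghvShift bas := by
  obtain ⟨hpL, hLCL, hCLCL⟩ := hB.column_L_CL hφ
  obtain ⟨hpI, hLCLI, hCLCLI⟩ := hB.column_L_CLI hφ
  obtain ⟨hICL, hCLICL⟩ := hB.column_I_CL hφ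
  obtain ⟨hICLI, hCLICLI⟩ := hB.column_I_CLI hφ
  obtain ⟨lam, hlam⟩ : ∃ lam, bas.repr (φ (bas (L 0))) (L 0) = lam := ⟨_, rfl⟩
  obtain ⟨mu, hmu⟩ : ∃ mu, bas.repr (φ (bas (L 0))) (I 0) = mu := ⟨_, rfl⟩
  have diag : ∀ {j : G → DGHV1Idx G},
      (∀ e, e ≠ 0 → bas.repr (φ (bas (L 0))) (j e) = 0) →
      ∀ b c : G, bas.repr (φ (bas (L 0))) (j (c - b)) =
        if b = c then bas.repr (φ (bas (L 0))) (j 0) else 0 := by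
    intro j hj b c
    split_ifs with h
    · rw [h, sub_self]
    · exact hj _ (sub_ne_zero.mpr (Ne.symm h))
  have hLL : ∀ b c, bas.repr (φ (bas (L b))) (L c) = if b = c then lam else 0 := by
    intro b c; rw [hB.repr_L_L hφ, diag hpL, hlam]
  have hLI : ∀ b c, bas.repr (φ (bas (L b))) (I c) = if b = c then mu else 0 := by
    intro b c; rw [hB.repr_L_I hφ, diag hpI, hmu]
  have hII : ∀ b c, bas.repr (φ (bas (I b))) (I c) = if b = c then lam else 0 := by
    intro b c; rw [hB.repr_I_I hφ, diag hpL, hlam]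
  have hCL := hB.repr_eq_zero_of_central (hφ.lie_apply_eq_zero hB.lie_CL)
  have hCLI := hB.repr_eq_zero_of_central (hφ.lie_apply_eq_zero hB.lie_CLI)
  rw [hlam] at hCLCL hCLICLI
  rw [hmu] at hCLCLI
  refine ⟨lam, mu, bas.ext fun k => bas.repr.injective (Finsupp.ext fun j => ?_)⟩
  rcases k with b | b | _ | _ <;> rcases j with c | c | _ | _ <;>
    simp [dghvShift, Finsupp.single_apply, hLL, hLI, hB.repr_I_L hφ, hII, hLCL, hLCLI, hICL, hICLI,
      hCLCL, hCLCLI, hCLICL, hCLICLI, hCL, hCLI]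

end HalfDerivation

end IsDGHVBasis

theorem eq_zero_of_forall_eq_smul_id_add_smul_dghvShift
    {bas : Module.Basis (DGHV1Idx G) ℂ Lg} {mul : Lg →ₗ[ℂ] Lg →ₗ[ℂ] Lg}
    (hcomm : ∀ x y, mul x y = mul y x)
    (hmul : ∀ z, ∃ lam mu : ℂ, mul z = lam • LinearMap.id + mu • dghvShift bas) :
    mul = 0 := by
  choose lam mu h using hmul
  have hCL : ∀ z, bas.repr (mul (bas CL) z) = bas.repr (lam z • bas CL + mu z • bas CLI) := by
    intro z
    rw [← hcomm, h]
    simp [dghvShift]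
  have hL0 := hCL (bas (L 0))
  rw [h] at hL0
  have hlam : lam (bas CL) = 0 := by
    simpa [dghvShift, Finsupp.single_apply] using congrArg (· (L 0)) hL0
  have hmu : mu (bas CL) = 0 := by
    simpa [dghvShift, Finsupp.single_apply] using congrArg (· (I 0)) hL0
  ext z : 1
  have hz := hCL z
  rw [h, hlam, hmu, zero_smul, zero_smul, add_zero, LinearMap.zero_apply, map_zero] at hz
  have hlz : lam z = 0 := by simpa [Finsupp.single_apply] using (congrArg (· CL) hz).symm
  have hmz : mu z = 0 := by simpa [Finsupp.single_apply] using (congrArg (· CLI) hz).symm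
  rw [h, hlz, hmz, zero_smul, zero_smul, add_zero, LinearMap.zero_apply]

end

theorem transposedPoisson_dgHV_one_trivial_general
    (G : AddSubgroup ℂ) [Nontrivial G]
    (Lg : Type*) [LieRing Lg] [LieAlgebra ℂ Lg]
    (bas : Module.Basis (DGHV1Idx G) ℂ Lg)
    (hLL : ∀ a b : G, ⁅bas (DGHV1Idx.L a), bas (DGHV1Idx.L b)⁆ =
      ((b : ℂ) - (a : ℂ)) • bas (DGHV1Idx.L (a + b)) +
        (if a + b = 0 then ((a : ℂ) ^ 3 - (a : ℂ)) / 12 else 0) •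
          bas DGHV1Idx.CL)
    (hLI : ∀ a b : G, ⁅bas (DGHV1Idx.L a), bas (DGHV1Idx.I b)⁆ =
      ((b : ℂ) - (a : ℂ)) • bas (DGHV1Idx.I (a + b)) +
        (if a + b = 0 then ((a : ℂ) ^ 3 - (a : ℂ)) / 12 else 0) •
          bas DGHV1Idx.CLI)
    (hII : ∀ a b : G, ⁅bas (DGHV1Idx.I a), bas (DGHV1Idx.I b)⁆ = 0)
    (hCL : ∀ x : Lg, ⁅bas DGHV1Idx.CL, x⁆ = 0)
    (hCLI : ∀ x : Lg, ⁅bas DGHV1Idx.CLI, x⁆ = 0)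
    (mul : Lg →ₗ[ℂ] Lg →ₗ[ℂ] Lg)
    (hcomm : ∀ x y : Lg, mul x y = mul y x)
    (hcompat : ∀ x y z : Lg,
      (2 : ℂ) • mul z ⁅x, y⁆ = ⁅mul z x, y⁆ + ⁅x, mul z y⁆) :
    mul = 0 := by
  have hB : IsDGHVBasis bas := ⟨hLL, hLI, hII, hCL, hCLI⟩
  exact eq_zero_of_forall_eq_smul_id_add_smul_dghvShift hcomm fun z =>
    hB.exists_eq_smul_id_add_smul_dghvShift fun x y => hcompat x y z

/-- every transposed Poisson structure on `g(G, 1)` is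
trivial. -/
theorem transposedPoisson_dgHV_one_trivial
    (G : AddSubgroup ℂ) [Nontrivial G]
    (Lg : Type*) [LieRing Lg] [LieAlgebra ℂ Lg]
    (bas : Module.Basis (DGHV1Idx G) ℂ Lg)
    (hLL : ∀ a b : G, ⁅bas (DGHV1Idx.L a), bas (DGHV1Idx.L b)⁆ =
      ((b : ℂ) - (a : ℂ)) • bas (DGHV1Idx.L (a + b)) +
        (if a + b = 0 then ((a : ℂ) ^ 3 - (a : ℂ)) / 12 else 0) •
          bas DGHV1Idx.CL)
    (hLI : ∀ a b : G, ⁅bas (DGHV1Idx.L a), bas (DGHV1Idx.I b)⁆ =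
      ((b : ℂ) - (a : ℂ)) • bas (DGHV1Idx.I (a + b)) +
        (if a + b = 0 then ((a : ℂ) ^ 3 - (a : ℂ)) / 12 else 0) •
          bas DGHV1Idx.CLI)
    (hII : ∀ a b : G, ⁅bas (DGHV1Idx.I a), bas (DGHV1Idx.I b)⁆ = 0)
    (hCL : ∀ x : Lg, ⁅bas DGHV1Idx.CL, x⁆ = 0)
    (hCLI : ∀ x : Lg, ⁅bas DGHV1Idx.CLI, x⁆ = 0)
    (mul : Lg →ₗ[ℂ] Lg →ₗ[ℂ] Lg)
    (hcomm : ∀ x y : Lg, mul x y = mul y x)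
    (hassoc : ∀ x y z : Lg, mul (mul x y) z = mul x (mul y z))
    (hcompat : ∀ x y z : Lg,
      (2 : ℂ) • mul z ⁅x, y⁆ = ⁅mul z x, y⁆ + ⁅x, mul z y⁆) :
    mul = 0 :=
  transposedPoisson_dgHV_one_trivial_general G Lg bas hLL hLI hII hCL hCLI mul hcomm hcompat
end

section
/- Let G be a nontrivial additive subgroup of ℂ and let β ∈ ℂ. Define a bilinear multiplication · on the deformed generalized Heisenberg–Virasoro algebra g(G,−1) by setting I_0 · I_0 = β C_L and the product of every other pair of basis elements equal to zero. Then · is commutative and associative, it is a transposed Poisson structure on g(G,−1) (i.e. 2 z·[x,y] = [z·x, y] + [x, z·y] for all x, y, z), and moreover (g(G,−1), ·, [·,·]) is a Poisson algebra, i.e. the Leibniz rule [x, y·z] = [x,y]·z + y·[x,z] holds for all x, y, z. -/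
open scoped Classical

/-- Index set for the basis of the deformed generalized Heisenberg–Virasoro
algebra `g(G, -1)`: vectors `L a`, `I a` for `a ∈ G` together with the
central element `C_L`. -/
inductive DGHVIdx (G : AddSubgroup ℂ) : Type
  | L : G → DGHVIdx G
  | I : G → DGHVIdx G
  | CL : DGHVIdx G

/-!
The product is `x · y = φ(x) φ(y) β C_L`, where `φ` is the `I_0`-coordinate. Since `C_L` is
central and `φ(C_L) = 0`, every product is central and every product of three elements vanishes;
since `I_0` never occurs in a bracket of basis vectors (`[L_a, I_{-a}] = 0`), `φ` vanishes on
`[g, g]`, so every product with a bracket vanishes too. All four identities then reduce to `0 = 0`.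
-/

open Module

theorem LinearMap.eq_coord_mul_coord_smul_of_basis {R M N ι : Type*} [CommRing R]
    [AddCommGroup M] [Module R M] [AddCommGroup N] [Module R N]
    (b : Basis ι R M) (i₀ : ι) (v : N) (B : M →ₗ[R] M →ₗ[R] N)
    (hB : ∀ i j, B (b i) (b j) = if i = i₀ ∧ j = i₀ then v else 0) (x y : M) :
    B x y = (b.coord i₀ x * b.coord i₀ y) • v := by
  have : B = ((LinearMap.mul R R).compl₁₂ (b.coord i₀) (b.coord i₀)).compr₂
      (LinearMap.toSpanSingleton R N v) :=
    LinearMap.ext_basis b b fun i j => by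
      by_cases hi : i = i₀ <;> by_cases hj : j = i₀ <;>
        simp [hB, hi, hj, eq_comm (a := i₀)]
  rw [this]
  rfl

theorem transposedPoisson_of_mul_eq_smul_central {R L : Type*} [CommRing R] [LieRing L]
    [LieAlgebra R L] (φ : L →ₗ[R] R) (c : L) (hc : ∀ x : L, ⁅c, x⁆ = 0) (hφc : φ c = 0)
    (hφ : ∀ x y : L, φ ⁅x, y⁆ = 0) (mul : L →ₗ[R] L →ₗ[R] L)
    (hmul : ∀ x y, mul x y = (φ x * φ y) • c) :
    (∀ x y : L, mul x y = mul y x) ∧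
    (∀ x y z : L, mul (mul x y) z = mul x (mul y z)) ∧
    (∀ x y z : L, (2 : R) • mul z ⁅x, y⁆ = ⁅mul z x, y⁆ + ⁅x, mul z y⁆) ∧
    (∀ x y z : L, ⁅x, mul y z⁆ = mul ⁅x, y⁆ z + mul y ⁅x, z⁆) := by
  have hc' : ∀ x, ⁅x, c⁆ = 0 := fun x => by rw [← lie_skew, hc, neg_zero]
  refine ⟨fun x y => by rw [hmul, hmul, mul_comm], ?_, ?_, ?_⟩ <;> intros <;>
    simp [hmul, hφ, hφc, hc, hc']

namespace DGHVIdx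

variable {G : AddSubgroup ℂ}

theorem mul_basis_eq_ite {M : Type*} [AddCommGroup M] [Module ℂ M]
    (bas : Basis (DGHVIdx G) ℂ M) (β : ℂ) (mul : M →ₗ[ℂ] M →ₗ[ℂ] M)
    (hmulII00 : mul (bas (I 0)) (bas (I 0)) = β • bas CL)
    (hmulLL : ∀ a b : G, mul (bas (L a)) (bas (L b)) = 0)
    (hmulLI : ∀ a b : G, mul (bas (L a)) (bas (I b)) = 0)
    (hmulIL : ∀ a b : G, mul (bas (I a)) (bas (L b)) = 0)
    (hmulLC : ∀ a : G, mul (bas (L a)) (bas CL) = 0)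
    (hmulCL' : ∀ a : G, mul (bas CL) (bas (L a)) = 0)
    (hmulIC : ∀ a : G, mul (bas (I a)) (bas CL) = 0)
    (hmulCI : ∀ a : G, mul (bas CL) (bas (I a)) = 0)
    (hmulCC : mul (bas CL) (bas CL) = 0)
    (hmulII : ∀ a b : G, ¬(a = 0 ∧ b = 0) →
      mul (bas (I a)) (bas (I b)) = 0)
    (i j : DGHVIdx G) :
    mul (bas i) (bas j) = if i = I 0 ∧ j = I 0 then β • bas CL else 0 := by
  rcases i with a | a | _ <;> rcases j with b | b | _
  case I.I =>
    simp only [I.injEq]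
    split_ifs with hab
    · obtain ⟨rfl, rfl⟩ := hab
      exact hmulII00
    · exact hmulII a b hab
  all_goals simp [*]

theorem coe_mul_coord_I_zero {M : Type*} [AddCommGroup M] [Module ℂ M]
    (bas : Basis (DGHVIdx G) ℂ M) (c : G) :
    (c : ℂ) * bas.coord (I 0) (bas (I c)) = 0 := by
  by_cases hc : c = 0 <;> simp [hc]

theorem coord_I_zero_lie {Lg : Type*} [LieRing Lg] [LieAlgebra ℂ Lg]
    (bas : Basis (DGHVIdx G) ℂ Lg)
    (hLL : ∀ a b : G, ⁅bas (L a), bas (L b)⁆ =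
      ((b : ℂ) - (a : ℂ)) • bas (L (a + b)) +
        (if a + b = 0 then ((a : ℂ) ^ 3 - (a : ℂ)) / 12 else 0) • bas CL)
    (hLI : ∀ a b : G, ⁅bas (L a), bas (I b)⁆ =
      ((a : ℂ) + (b : ℂ)) • bas (I (a + b)))
    (hII : ∀ a b : G, ⁅bas (I a), bas (I b)⁆ = 0)
    (hCL : ∀ x : Lg, ⁅bas CL, x⁆ = 0) (x y : Lg) :
    bas.coord (I 0) ⁅x, y⁆ = 0 := by
  let bracket : Lg →ₗ[ℂ] Lg →ₗ[ℂ] Lg := LinearMap.mk₂ ℂ (fun x y => ⁅x, y⁆)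
    add_lie smul_lie lie_add lie_smul
  suffices bracket.compr₂ (bas.coord (I 0)) = 0 from
    LinearMap.congr_fun₂ this x y
  refine LinearMap.ext_basis bas bas fun i j => ?_
  have hLI' : ∀ a b : G, bas.coord (I 0) ⁅bas (L a), bas (I b)⁆ = 0 :=
    fun a b => by
      rw [hLI, map_smul, smul_eq_mul, ← AddSubgroup.coe_add, coe_mul_coord_I_zero]
  have hIL' : ∀ a b : G, bas.coord (I 0) ⁅bas (I a), bas (L b)⁆ = 0 :=
    fun a b => by rw [← lie_skew, map_neg, hLI', neg_zero]
  have hCL' : ∀ x : Lg, ⁅x, bas CL⁆ = 0 := fun x => by rw [← lie_skew, hCL, neg_zero]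
  rcases i with a | a | _ <;> rcases j with b | b | _ <;>
    simp [bracket, hLL, hII, hCL, hCL', hLI', hIL', apply_ite]

end DGHVIdx

theorem transposedPoisson_dgHV_neg_one_construction_general
    (G : AddSubgroup ℂ) (β : ℂ)
    (Lg : Type*) [LieRing Lg] [LieAlgebra ℂ Lg]
    (bas : Module.Basis (DGHVIdx G) ℂ Lg)
    (hLL : ∀ a b : G, ⁅bas (DGHVIdx.L a), bas (DGHVIdx.L b)⁆ =
      ((b : ℂ) - (a : ℂ)) • bas (DGHVIdx.L (a + b)) +
        (if a + b = 0 then ((a : ℂ) ^ 3 - (a : ℂ)) / 12 else 0) • bas DGHVIdx.CL)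
    (hLI : ∀ a b : G, ⁅bas (DGHVIdx.L a), bas (DGHVIdx.I b)⁆ =
      ((a : ℂ) + (b : ℂ)) • bas (DGHVIdx.I (a + b)))
    (hII : ∀ a b : G, ⁅bas (DGHVIdx.I a), bas (DGHVIdx.I b)⁆ = 0)
    (hCL : ∀ x : Lg, ⁅bas DGHVIdx.CL, x⁆ = 0)
    (mul : Lg →ₗ[ℂ] Lg →ₗ[ℂ] Lg)
    (hmulII00 : mul (bas (DGHVIdx.I 0)) (bas (DGHVIdx.I 0)) = β • bas DGHVIdx.CL)
    (hmulLL : ∀ a b : G, mul (bas (DGHVIdx.L a)) (bas (DGHVIdx.L b)) = 0)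
    (hmulLI : ∀ a b : G, mul (bas (DGHVIdx.L a)) (bas (DGHVIdx.I b)) = 0)
    (hmulIL : ∀ a b : G, mul (bas (DGHVIdx.I a)) (bas (DGHVIdx.L b)) = 0)
    (hmulLC : ∀ a : G, mul (bas (DGHVIdx.L a)) (bas DGHVIdx.CL) = 0)
    (hmulCL' : ∀ a : G, mul (bas DGHVIdx.CL) (bas (DGHVIdx.L a)) = 0)
    (hmulIC : ∀ a : G, mul (bas (DGHVIdx.I a)) (bas DGHVIdx.CL) = 0)
    (hmulCI : ∀ a : G, mul (bas DGHVIdx.CL) (bas (DGHVIdx.I a)) = 0)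
    (hmulCC : mul (bas DGHVIdx.CL) (bas DGHVIdx.CL) = 0)
    (hmulII : ∀ a b : G, ¬(a = 0 ∧ b = 0) →
      mul (bas (DGHVIdx.I a)) (bas (DGHVIdx.I b)) = 0) :
    (∀ x y : Lg, mul x y = mul y x) ∧
    (∀ x y z : Lg, mul (mul x y) z = mul x (mul y z)) ∧
    (∀ x y z : Lg,
      (2 : ℂ) • mul z ⁅x, y⁆ = ⁅mul z x, y⁆ + ⁅x, mul z y⁆) ∧
    (∀ x y z : Lg, ⁅x, mul y z⁆ = mul ⁅x, y⁆ z + mul y ⁅x, z⁆) :=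
  transposedPoisson_of_mul_eq_smul_central (bas.coord (DGHVIdx.I 0)) (β • bas DGHVIdx.CL)
    (fun x => by rw [smul_lie, hCL, smul_zero]) (by simp)
    (DGHVIdx.coord_I_zero_lie bas hLL hLI hII hCL) mul
    (LinearMap.eq_coord_mul_coord_smul_of_basis bas _ _ mul
      (DGHVIdx.mul_basis_eq_ite bas β mul hmulII00 hmulLL hmulLI hmulIL hmulLC hmulCL' hmulIC
        hmulCI hmulCC hmulII))

/-- the bilinear multiplication on `g(G, -1)` given by
`I_0 · I_0 = β C_L` and zero on all other pairs of basis vectors is a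
commutative associative multiplication, it is a transposed Poisson structure
on `g(G, -1)`, and it even makes `g(G, -1)` a Poisson algebra. -/
theorem transposedPoisson_dgHV_neg_one_construction
    (G : AddSubgroup ℂ) [Nontrivial G] (β : ℂ)
    (Lg : Type*) [LieRing Lg] [LieAlgebra ℂ Lg]
    (bas : Module.Basis (DGHVIdx G) ℂ Lg)
    (hLL : ∀ a b : G, ⁅bas (DGHVIdx.L a), bas (DGHVIdx.L b)⁆ =
      ((b : ℂ) - (a : ℂ)) • bas (DGHVIdx.L (a + b)) +
        (if a + b = 0 then ((a : ℂ) ^ 3 - (a : ℂ)) / 12 else 0) • bas DGHVIdx.CL)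
    (hLI : ∀ a b : G, ⁅bas (DGHVIdx.L a), bas (DGHVIdx.I b)⁆ =
      ((a : ℂ) + (b : ℂ)) • bas (DGHVIdx.I (a + b)))
    (hII : ∀ a b : G, ⁅bas (DGHVIdx.I a), bas (DGHVIdx.I b)⁆ = 0)
    (hCL : ∀ x : Lg, ⁅bas DGHVIdx.CL, x⁆ = 0)
    (mul : Lg →ₗ[ℂ] Lg →ₗ[ℂ] Lg)
    (hmulII00 : mul (bas (DGHVIdx.I 0)) (bas (DGHVIdx.I 0)) = β • bas DGHVIdx.CL)
    (hmulLL : ∀ a b : G, mul (bas (DGHVIdx.L a)) (bas (DGHVIdx.L b)) = 0)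
    (hmulLI : ∀ a b : G, mul (bas (DGHVIdx.L a)) (bas (DGHVIdx.I b)) = 0)
    (hmulIL : ∀ a b : G, mul (bas (DGHVIdx.I a)) (bas (DGHVIdx.L b)) = 0)
    (hmulLC : ∀ a : G, mul (bas (DGHVIdx.L a)) (bas DGHVIdx.CL) = 0)
    (hmulCL' : ∀ a : G, mul (bas DGHVIdx.CL) (bas (DGHVIdx.L a)) = 0)
    (hmulIC : ∀ a : G, mul (bas (DGHVIdx.I a)) (bas DGHVIdx.CL) = 0)
    (hmulCI : ∀ a : G, mul (bas DGHVIdx.CL) (bas (DGHVIdx.I a)) = 0)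
    (hmulCC : mul (bas DGHVIdx.CL) (bas DGHVIdx.CL) = 0)
    (hmulII : ∀ a b : G, ¬(a = 0 ∧ b = 0) →
      mul (bas (DGHVIdx.I a)) (bas (DGHVIdx.I b)) = 0) :
    (∀ x y : Lg, mul x y = mul y x) ∧
    (∀ x y z : Lg, mul (mul x y) z = mul x (mul y z)) ∧
    (∀ x y z : Lg,
      (2 : ℂ) • mul z ⁅x, y⁆ = ⁅mul z x, y⁆ + ⁅x, mul z y⁆) ∧
    (∀ x y z : Lg, ⁅x, mul y z⁆ = mul ⁅x, y⁆ z + mul y ⁅x, z⁆) :=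
  transposedPoisson_dgHV_neg_one_construction_general G β Lg bas hLL hLI hII hCL mul hmulII00 hmulLL
    hmulLI hmulIL hmulLC hmulCL' hmulIC hmulCI hmulCC hmulII
end

section
/- Let G be a nontrivial additive subgroup of ℂ, let λ ∈ ℂ, and let (a^{d,k}) be a finitely supported family of complex numbers indexed by d ∈ G and integers k ≥ 1. Then the linear map φ on the not-finitely graded Heisenberg–Virasoro algebra Ŵ(G) defined on the basis by φ(L_{α,i}) = λ L_{α,i} + Σ_{d ∈ G} Σ_{k ≥ 1} a^{d,k} L_{α+d, i+k} and φ(C) = λ C is a 1/2-derivation of Ŵ(G). -/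
open scoped Classical

/-- Index set for the basis of the not-finitely graded Heisenberg–Virasoro
algebra `Ŵ(G)`: vectors `L α i` for `α ∈ G`, `i ∈ ℤ_{≥0}`, together with the
central element `C`. -/
inductive WhatIdx (G : AddSubgroup ℂ) : Type
  | L : G → ℕ → WhatIdx G
  | C : WhatIdx G

/-!
The `λ`-part of `φ` is a scalar multiple of the identity, which is a `1/2`-derivation of every
Lie algebra. The remaining part is a finite linear combination of the shifts
`T_{d,k} : L_{α,i} ↦ L_{α+d,i+k}, C ↦ 0` with `k ≥ 1`, and it suffices to check each shift on
pairs of basis vectors. There `k ≥ 1` rules out a central term in `[T_{d,k} L_{α,i}, L_{β,j}]`,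
and the coefficients `(β - α ∓ d)` and `(j - i ∓ k)` of the two halves add up to twice those
of `[L_{α,i}, L_{β,j}]`.
-/

section DeltaDerivation

variable {R L : Type*} [CommRing R] [LieRing L] [LieAlgebra R L]

/-- Filippov's `δ`-derivations. -/
def deltaDerivations (δ : R) : Submodule R (Module.End R L) where
  carrier := {φ | ∀ x y : L, φ ⁅x, y⁆ = δ • (⁅φ x, y⁆ + ⁅x, φ y⁆)}
  add_mem' {φ ψ} hφ hψ x y := by
    simp only [LinearMap.add_apply, hφ x y, hψ x y, add_lie, lie_add]
    module
  zero_mem' x y := by simp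
  smul_mem' c φ hφ x y := by
    simp only [LinearMap.smul_apply, hφ x y, smul_lie, lie_smul]
    module

theorem mem_deltaDerivations {δ : R} {φ : Module.End R L} :
    φ ∈ deltaDerivations δ ↔ ∀ x y : L, φ ⁅x, y⁆ = δ • (⁅φ x, y⁆ + ⁅x, φ y⁆) :=
  Iff.rfl

theorem mem_deltaDerivations_of_basis {ι : Type*} (b : Module.Basis ι R L) {δ : R}
    {φ : Module.End R L}
    (h : ∀ u v, φ ⁅b u, b v⁆ = δ • (⁅φ (b u), b v⁆ + ⁅b u, φ (b v)⁆)) :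
    φ ∈ deltaDerivations δ := by
  let bracket : L →ₗ[R] L →ₗ[R] L := LinearMap.mk₂ R (⁅·, ·⁆) add_lie smul_lie lie_add lie_smul
  have hB : bracket.compr₂ φ = δ • (bracket ∘ₗ φ + bracket.compl₂ φ) :=
    LinearMap.ext_basis b b fun u v => by simpa [bracket] using h u v
  intro x y
  simpa [bracket] using LinearMap.congr_fun₂ hB x y

theorem smul_one_mem_deltaDerivations {δ : R} (hδ : 2 * δ = 1) (c : R) :
    c • (1 : Module.End R L) ∈ deltaDerivations δ := by
  intro x y
  simp only [LinearMap.smul_apply, Module.End.one_apply, smul_lie, lie_smul, ← two_smul R,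
    smul_smul, ← mul_assoc, mul_comm δ 2, hδ, one_mul]

end DeltaDerivation

section Shift

variable {G : AddSubgroup ℂ} {Lg : Type*} [LieRing Lg] [LieAlgebra ℂ Lg]
  (bas : Module.Basis (WhatIdx G) ℂ Lg)

noncomputable def whatShift (d : G) (k : ℕ) : Module.End ℂ Lg :=
  bas.constr ℂ fun
    | .L α i => bas (.L (α + d) (i + k))
    | .C => 0

@[simp]
theorem whatShift_L (d : G) (k : ℕ) (α : G) (i : ℕ) :
    whatShift bas d k (bas (.L α i)) = bas (.L (α + d) (i + k)) := by
  simp [whatShift]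

@[simp]
theorem whatShift_C (d : G) (k : ℕ) : whatShift bas d k (bas .C) = 0 := by
  simp [whatShift]

theorem whatShift_mem_deltaDerivations
    (hLL : ∀ (α β : G) (i j : ℕ),
      ⁅bas (WhatIdx.L α i), bas (WhatIdx.L β j)⁆ =
        ((β : ℂ) - (α : ℂ)) • bas (WhatIdx.L (α + β) (i + j)) +
        ((j : ℂ) - (i : ℂ)) • bas (WhatIdx.L (α + β) (i + j + 1)) +
        (if α + β = 0 ∧ i = 0 ∧ j = 0 then ((α : ℂ) ^ 3 - (α : ℂ)) / 12
          else 0) • bas WhatIdx.C)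
    (hC : ∀ x : Lg, ⁅bas WhatIdx.C, x⁆ = 0) (d : G) {k : ℕ} (hk : k ≠ 0) :
    whatShift bas d k ∈ deltaDerivations (1 / 2 : ℂ) := by
  have hC' (x : Lg) : ⁅x, bas .C⁆ = 0 := by rw [← lie_skew, hC, neg_zero]
  refine mem_deltaDerivations_of_basis bas fun u v => ?_
  rcases u with ⟨α, i⟩ | _ <;> rcases v with ⟨β, j⟩ | _
  · have hleft : ¬(α + d + β = 0 ∧ i + k = 0 ∧ j = 0) := fun h => hk (by omega)
    have hright : ¬(α + (β + d) = 0 ∧ i = 0 ∧ j + k = 0) := fun h => hk (by omega)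
    simp only [hLL, map_add, map_smul, whatShift_L, whatShift_C, hleft, hright, if_false,
      smul_zero, add_zero]
    rw [show α + d + β = α + β + d by abel, show α + (β + d) = α + β + d by abel,
      show i + k + j = i + j + k by omega, show i + (j + k) = i + j + k by omega,
      show i + j + 1 + k = i + j + k + 1 by omega]
    push_cast
    module
  · simp [hC']
  · simp [hC]
  · simp [hC]

end Shift

theorem halfDerivation_What_construction_general
    (G : AddSubgroup ℂ)
    (Lg : Type*) [LieRing Lg] [LieAlgebra ℂ Lg]
    (bas : Module.Basis (WhatIdx G) ℂ Lg)
    (hLL : ∀ (α β : G) (i j : ℕ),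
      ⁅bas (WhatIdx.L α i), bas (WhatIdx.L β j)⁆ =
        ((β : ℂ) - (α : ℂ)) • bas (WhatIdx.L (α + β) (i + j)) +
        ((j : ℂ) - (i : ℂ)) • bas (WhatIdx.L (α + β) (i + j + 1)) +
        (if α + β = 0 ∧ i = 0 ∧ j = 0 then ((α : ℂ) ^ 3 - (α : ℂ)) / 12
          else 0) • bas WhatIdx.C)
    (hC : ∀ x : Lg, ⁅bas WhatIdx.C, x⁆ = 0)
    (lam : ℂ) (a : G × ℕ →₀ ℂ) (ha : ∀ d : G, a (d, 0) = 0)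
    (φ : Lg →ₗ[ℂ] Lg)
    (hφL : ∀ (α : G) (i : ℕ), φ (bas (WhatIdx.L α i)) =
      lam • bas (WhatIdx.L α i) +
        a.sum (fun p c => c • bas (WhatIdx.L (α + p.1) (i + p.2))))
    (hφC : φ (bas WhatIdx.C) = lam • bas WhatIdx.C) :
    ∀ x y : Lg, φ ⁅x, y⁆ = (1 / 2 : ℂ) • (⁅φ x, y⁆ + ⁅x, φ y⁆) := by
  have hφ : φ = lam • 1 + a.sum fun p c => c • whatShift bas p.1 p.2 := by
    refine bas.ext fun u => ?_
    cases u <;> simp [hφL, hφC, Finsupp.sum]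
  rw [← mem_deltaDerivations, hφ]
  refine add_mem (smul_one_mem_deltaDerivations (by norm_num) lam) (sum_mem fun p hp => ?_)
  refine Submodule.smul_mem _ _ (whatShift_mem_deltaDerivations bas hLL hC p.1 fun hk => ?_)
  exact Finsupp.mem_support_iff.mp hp (by rw [← ha p.1, ← hk])

/-- for any `λ ∈ ℂ` and any finitely supported family
`(a^{d,k})` with `d ∈ G`, `k ≥ 1`, the linear map given on the basis of
`Ŵ(G)` by `φ(L_{α,i}) = λ L_{α,i} + Σ_{d,k≥1} a^{d,k} L_{α+d,i+k}` and
`φ(C) = λ C` is a `1/2`-derivation of `Ŵ(G)`. -/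
theorem halfDerivation_What_construction
    (G : AddSubgroup ℂ) [Nontrivial G]
    (Lg : Type*) [LieRing Lg] [LieAlgebra ℂ Lg]
    (bas : Module.Basis (WhatIdx G) ℂ Lg)
    (hLL : ∀ (α β : G) (i j : ℕ),
      ⁅bas (WhatIdx.L α i), bas (WhatIdx.L β j)⁆ =
        ((β : ℂ) - (α : ℂ)) • bas (WhatIdx.L (α + β) (i + j)) +
        ((j : ℂ) - (i : ℂ)) • bas (WhatIdx.L (α + β) (i + j + 1)) +
        (if α + β = 0 ∧ i = 0 ∧ j = 0 then ((α : ℂ) ^ 3 - (α : ℂ)) / 12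
          else 0) • bas WhatIdx.C)
    (hC : ∀ x : Lg, ⁅bas WhatIdx.C, x⁆ = 0)
    (lam : ℂ) (a : G × ℕ →₀ ℂ) (ha : ∀ d : G, a (d, 0) = 0)
    (φ : Lg →ₗ[ℂ] Lg)
    (hφL : ∀ (α : G) (i : ℕ), φ (bas (WhatIdx.L α i)) =
      lam • bas (WhatIdx.L α i) +
        a.sum (fun p c => c • bas (WhatIdx.L (α + p.1) (i + p.2))))
    (hφC : φ (bas WhatIdx.C) = lam • bas WhatIdx.C) :
    ∀ x y : Lg, φ ⁅x, y⁆ = (1 / 2 : ℂ) • (⁅φ x, y⁆ + ⁅x, φ y⁆) :=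
  halfDerivation_What_construction_general G Lg bas hLL hC lam a ha φ hφL hφC
end

section
/- Let G be a nontrivial additive subgroup of ℂ and let (a^{d,k}) be a finitely supported family of complex numbers indexed by d ∈ G and k ∈ ℤ_{≥0}. Define a bilinear multiplication · on the not-finitely graded Heisenberg–Virasoro algebra Ŵ(G) by L_{α,i} · L_{β,j} = Σ_{d ∈ G} Σ_{k ∈ ℤ_{≥0}} a^{d,k} L_{d+α+β, k+i+j+1} and C · L_{α,i} = L_{α,i} · C = C · C = 0. Then · is commutative and associative and is a transposed Poisson structure on Ŵ(G) (i.e. 2 z·[x,y] = [z·x, y] + [x, z·y] for all x, y, z). Moreover, if some a^{d,k} ≠ 0, then (Ŵ(G), ·, [·,·]) is not a Poisson algebra, i.e. the Leibniz rule [x, y·z] = [x,y]·z + y·[x,z] fails for some x, y, z. -/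
/-!
Left multiplication by `L_{γ,k}` is the combination `∑ a^{d,m} • S_{d+γ, m+k+1}` of the
shift operators `S_{δ,n} : L_{α,i} ↦ L_{δ+α, n+i}`, `C ↦ 0`. For `n ≥ 1` the shift never
produces degree-`0` brackets, so the central cocycle does not interfere and `S_{δ,n}` is a
½-derivation. Since ½-derivations form a subspace, every multiplication operator is one,
which is exactly the transposed Poisson identity. Commutativity and associativity only involve
adding indices. The Leibniz rule fails at `x = y = z = L_{0,0}`: the left side `⁅x, x · x⁆`
has the nonzero coefficient `a^q (q₂ + 1)` at `L_{q₁, q₂+2}` for `q` of maximal degree in the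
support of `a`, while the right side vanishes because `⁅x, x⁆ = 0`.
-/

open scoped Classical

section HalfDerivation

variable (R L : Type*) [CommRing R] [LieRing L] [LieAlgebra R L]

def halfDerivations : Submodule R (Module.End R L) where
  carrier := {φ | ∀ x y, (2 : R) • φ ⁅x, y⁆ = ⁅φ x, y⁆ + ⁅x, φ y⁆}
  add_mem' {φ ψ} hφ hψ x y := by
    simp only [LinearMap.add_apply, add_lie, lie_add, smul_add, hφ x y, hψ x y]
    abel
  zero_mem' := by simp
  smul_mem' c φ hφ x y := by
    simp only [LinearMap.smul_apply, smul_lie, lie_smul, smul_comm (2 : R) c,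
      hφ x y, smul_add]

variable {R L}

theorem mem_halfDerivations_of_basis {ι : Type*} (b : Module.Basis ι R L) {φ : Module.End R L}
    (h : ∀ i j, (2 : R) • φ ⁅b i, b j⁆ = ⁅φ (b i), b j⁆ + ⁅b i, φ (b j)⁆) :
    φ ∈ halfDerivations R L := by
  let ad : L →ₗ[R] Module.End R L := LieAlgebra.ad R L
  have hbilin : (2 : R) • ad.compr₂ φ = ad ∘ₗ φ + ad.compl₂ φ :=
    LinearMap.ext_basis b b fun i j => by simpa [ad] using h i j
  intro x y
  simpa [ad] using LinearMap.congr_fun₂ hbilin x y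

end HalfDerivation

namespace HeisenbergVirasoro

variable {G : AddSubgroup ℂ} {Lg : Type*} [LieRing Lg] [LieAlgebra ℂ Lg]
  (bas : Module.Basis (WhatIdx G) ℂ Lg)

noncomputable def basisShift (δ : G) (m : ℕ) : Module.End ℂ Lg :=
  bas.constr ℂ fun
    | .L α i => bas (.L (δ + α) (m + i))
    | .C => 0

@[simp]
theorem basisShift_L (δ α : G) (m i : ℕ) :
    basisShift bas δ m (bas (.L α i)) = bas (.L (δ + α) (m + i)) := by
  simp [basisShift]

@[simp]
theorem basisShift_C (δ : G) (m : ℕ) : basisShift bas δ m (bas .C) = 0 := by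
  simp [basisShift]

variable {bas}
variable (hLL : ∀ (α β : G) (i j : ℕ),
      ⁅bas (WhatIdx.L α i), bas (WhatIdx.L β j)⁆ =
        ((β : ℂ) - (α : ℂ)) • bas (WhatIdx.L (α + β) (i + j)) +
        ((j : ℂ) - (i : ℂ)) • bas (WhatIdx.L (α + β) (i + j + 1)) +
        (if α + β = 0 ∧ i = 0 ∧ j = 0 then ((α : ℂ) ^ 3 - (α : ℂ)) / 12
          else 0) • bas WhatIdx.C)
  (hC : ∀ x : Lg, ⁅bas WhatIdx.C, x⁆ = 0)

include hLL hC in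
theorem basisShift_succ_mem_halfDerivations (δ : G) (n : ℕ) :
    basisShift bas δ (n + 1) ∈ halfDerivations ℂ Lg := by
  have hCr (x : Lg) : ⁅x, bas .C⁆ = 0 := by rw [← lie_skew, hC, neg_zero]
  refine mem_halfDerivations_of_basis bas ?_
  rintro (⟨α, i⟩ | _) (⟨β, j⟩ | _)
  · simp only [hLL, map_add, map_smul, basisShift_L, basisShift_C, smul_zero, add_zero]
    rw [if_neg (by rintro ⟨-, h, -⟩; omega), if_neg (by rintro ⟨-, -, h⟩; omega)]
    rw [show δ + α + β = δ + (α + β) by abel, show α + (δ + β) = δ + (α + β) by abel,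
      show n + 1 + i + j = n + 1 + (i + j) by omega,
      show i + (n + 1 + j) = n + 1 + (i + j) by omega, ← add_assoc (n + 1) (i + j) 1]
    push_cast
    module
  all_goals simp [hC, hCr]

variable {a : G × ℕ →₀ ℂ} {mul : Lg →ₗ[ℂ] Lg →ₗ[ℂ] Lg}
  (hmulLL : ∀ (α β : G) (i j : ℕ),
      mul (bas (WhatIdx.L α i)) (bas (WhatIdx.L β j)) =
        a.sum (fun p c => c • bas (WhatIdx.L (p.1 + α + β) (p.2 + i + j + 1))))
  (hmulCL : ∀ (α : G) (i : ℕ), mul (bas WhatIdx.C) (bas (WhatIdx.L α i)) = 0)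
  (hmulLC : ∀ (α : G) (i : ℕ), mul (bas (WhatIdx.L α i)) (bas WhatIdx.C) = 0)
  (hmulCC : mul (bas WhatIdx.C) (bas WhatIdx.C) = 0)

include hmulCL hmulCC in
theorem mul_basis_C_left : mul (bas .C) = 0 :=
  bas.ext fun
    | .L α i => hmulCL α i
    | .C => hmulCC

include hmulLC hmulCC in
theorem mul_basis_C_right (x : Lg) : mul x (bas .C) = 0 := by
  have : mul.flip (bas .C) = 0 := bas.ext fun
    | .L α i => hmulLC α i
    | .C => hmulCC
  simpa using LinearMap.congr_fun this x

include hmulLL hmulCL hmulLC in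
theorem mul_flip_eq : mul.flip = mul := by
  refine LinearMap.ext_basis bas bas ?_
  rintro (⟨α, i⟩ | _) (⟨β, j⟩ | _)
  · simp only [LinearMap.flip_apply, hmulLL, add_right_comm _ α β, add_right_comm _ i j]
  all_goals simp [hmulCL, hmulLC]

include hmulLL hmulCL hmulLC hmulCC in
theorem mul_compr₂_mul_eq :
    mul.compr₂ mul = (LinearMap.llcomp ℂ Lg Lg Lg).compl₁₂ mul mul := by
  refine LinearMap.ext_basis bas bas fun i j => bas.ext fun k => ?_
  simp only [LinearMap.compr₂_apply, LinearMap.compl₁₂_apply, LinearMap.llcomp_apply]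
  rcases i with ⟨α, i⟩ | _ <;> rcases j with ⟨β, j⟩ | _ <;> rcases k with ⟨γ, k⟩ | _
  · simp only [hmulLL, Finsupp.sum, map_sum, LinearMap.coe_sum, Finset.sum_apply, map_smul,
      LinearMap.smul_apply, Finset.smul_sum, smul_smul]
    refine Finset.sum_congr rfl fun p _ => Finset.sum_congr rfl fun q _ => ?_
    rw [show q.1 + (p.1 + α + β) + γ = q.1 + α + (p.1 + β + γ) by abel,
      show q.2 + (p.2 + i + j + 1) + k + 1 = q.2 + i + (p.2 + j + k + 1) + 1 by omega]
  all_goals simp [mul_basis_C_left hmulCL hmulCC, mul_basis_C_right hmulLC hmulCC]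

include hmulLL hmulLC in
theorem mul_basis_L_eq_sum_basisShift (γ : G) (k : ℕ) :
    mul (bas (.L γ k)) = a.sum fun p c => c • basisShift bas (p.1 + γ) (p.2 + k + 1) := by
  refine bas.ext fun
    | .L β j => ?_
    | .C => by simp [hmulLC, Finsupp.sum]
  simp only [hmulLL, LinearMap.finsupp_sum_apply, LinearMap.smul_apply, basisShift_L]
  exact Finsupp.sum_congr fun p _ => by rw [Nat.add_right_comm (p.2 + k) j 1]

include hLL hC hmulLL hmulCL hmulLC hmulCC in
theorem mul_mem_halfDerivations (z : Lg) : mul z ∈ halfDerivations ℂ Lg := by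
  have hbasis (k : WhatIdx G) : bas k ∈ (halfDerivations ℂ Lg).comap mul := by
    rcases k with ⟨γ, k⟩ | _
    · rw [Submodule.mem_comap, mul_basis_L_eq_sum_basisShift hmulLL hmulLC]
      exact Submodule.finsuppSum_mem ℂ _ _ _ fun p _ =>
        Submodule.smul_mem _ _ (basisShift_succ_mem_halfDerivations hLL hC _ _)
    · rw [Submodule.mem_comap, mul_basis_C_left hmulCL hmulCC]
      exact Submodule.zero_mem _
  exact Submodule.span_le.2 (Set.range_subset_iff.2 hbasis) (bas.mem_span z)

include hLL in
theorem lie_basis_L_zero_zero_L_succ (d : G) (k : ℕ) :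
    ⁅bas (.L 0 0), bas (.L d (k + 1))⁆ =
      (d : ℂ) • bas (.L d (k + 1)) + ((k : ℂ) + 1) • bas (.L d (k + 2)) := by
  simp [hLL]

include hLL hmulLL in
theorem lie_basis_L_zero_zero_mul_self_ne_zero (ha : a ≠ 0) :
    ⁅bas (.L 0 0), mul (bas (.L 0 0)) (bas (.L 0 0))⁆ ≠ 0 := by
  obtain ⟨q, hq, hq_max⟩ :=
    a.support.exists_max_image Prod.snd (Finsupp.support_nonempty_iff.2 ha)
  have hcoeff :
      bas.repr ⁅bas (.L 0 0), mul (bas (.L 0 0)) (bas (.L 0 0))⁆ (.L q.1 (q.2 + 2)) =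
        a q * (q.2 + 1) := by
    simp only [hmulLL, add_zero, Finsupp.sum, lie_sum, lie_smul, lie_basis_L_zero_zero_L_succ hLL,
      map_sum, map_smul, map_add, Module.Basis.repr_self, Finset.sum_apply', Finsupp.smul_apply,
      Finsupp.add_apply, Finsupp.single_apply, WhatIdx.L.injEq, smul_eq_mul]
    refine (Finset.sum_eq_single q (fun p hp hpq => ?_) (absurd hq)).trans (by simp)
    have := hq_max p hp
    rw [if_neg (by omega), if_neg fun h => hpq (Prod.ext h.1 (by omega))]
    ring
  intro h
  rw [h, map_zero, Finsupp.zero_apply] at hcoeff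
  exact mul_ne_zero (Finsupp.mem_support_iff.1 hq) (Nat.cast_add_one_ne_zero q.2) hcoeff.symm

end HeisenbergVirasoro

theorem transposedPoisson_What_construction_general
    (G : AddSubgroup ℂ)
    (Lg : Type*) [LieRing Lg] [LieAlgebra ℂ Lg]
    (bas : Module.Basis (WhatIdx G) ℂ Lg)
    (hLL : ∀ (α β : G) (i j : ℕ),
      ⁅bas (WhatIdx.L α i), bas (WhatIdx.L β j)⁆ =
        ((β : ℂ) - (α : ℂ)) • bas (WhatIdx.L (α + β) (i + j)) +
        ((j : ℂ) - (i : ℂ)) • bas (WhatIdx.L (α + β) (i + j + 1)) +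
        (if α + β = 0 ∧ i = 0 ∧ j = 0 then ((α : ℂ) ^ 3 - (α : ℂ)) / 12
          else 0) • bas WhatIdx.C)
    (hC : ∀ x : Lg, ⁅bas WhatIdx.C, x⁆ = 0)
    (a : G × ℕ →₀ ℂ)
    (mul : Lg →ₗ[ℂ] Lg →ₗ[ℂ] Lg)
    (hmulLL : ∀ (α β : G) (i j : ℕ),
      mul (bas (WhatIdx.L α i)) (bas (WhatIdx.L β j)) =
        a.sum (fun p c => c • bas (WhatIdx.L (p.1 + α + β) (p.2 + i + j + 1))))
    (hmulCL : ∀ (α : G) (i : ℕ), mul (bas WhatIdx.C) (bas (WhatIdx.L α i)) = 0)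
    (hmulLC : ∀ (α : G) (i : ℕ), mul (bas (WhatIdx.L α i)) (bas WhatIdx.C) = 0)
    (hmulCC : mul (bas WhatIdx.C) (bas WhatIdx.C) = 0) :
    (∀ x y : Lg, mul x y = mul y x) ∧
    (∀ x y z : Lg, mul (mul x y) z = mul x (mul y z)) ∧
    (∀ x y z : Lg,
      (2 : ℂ) • mul z ⁅x, y⁆ = ⁅mul z x, y⁆ + ⁅x, mul z y⁆) ∧
    (a ≠ 0 → ∃ x y z : Lg, ⁅x, mul y z⁆ ≠ mul ⁅x, y⁆ z + mul y ⁅x, z⁆) := by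
  refine ⟨fun x y => ?_, fun x y z => ?_, fun x y z => ?_, fun ha => ?_⟩
  · exact LinearMap.congr_fun₂ (HeisenbergVirasoro.mul_flip_eq hmulLL hmulCL hmulLC) y x
  · exact LinearMap.congr_fun (LinearMap.congr_fun₂
      (HeisenbergVirasoro.mul_compr₂_mul_eq hmulLL hmulCL hmulLC hmulCC) x y) z
  · exact HeisenbergVirasoro.mul_mem_halfDerivations hLL hC hmulLL hmulCL hmulLC hmulCC z x y
  · refine ⟨bas (.L 0 0), bas (.L 0 0), bas (.L 0 0), ?_⟩
    simpa using HeisenbergVirasoro.lie_basis_L_zero_zero_mul_self_ne_zero hLL hmulLL ha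

/-- for any finitely supported family `(a^{d,k})`, `d ∈ G`,
`k ∈ ℤ_{≥0}`, the bilinear multiplication on `Ŵ(G)` given on the basis by
`L_{α,i} · L_{β,j} = Σ_{d,k} a^{d,k} L_{d+α+β, k+i+j+1}` and
`C · L_{α,i} = L_{α,i} · C = C · C = 0` is commutative and associative and is
a transposed Poisson structure on `Ŵ(G)`; moreover if some `a^{d,k} ≠ 0`,
then the Leibniz rule fails, i.e. the structure is not a Poisson algebra. -/
theorem transposedPoisson_What_construction
    (G : AddSubgroup ℂ) [Nontrivial G]
    (Lg : Type*) [LieRing Lg] [LieAlgebra ℂ Lg]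
    (bas : Module.Basis (WhatIdx G) ℂ Lg)
    (hLL : ∀ (α β : G) (i j : ℕ),
      ⁅bas (WhatIdx.L α i), bas (WhatIdx.L β j)⁆ =
        ((β : ℂ) - (α : ℂ)) • bas (WhatIdx.L (α + β) (i + j)) +
        ((j : ℂ) - (i : ℂ)) • bas (WhatIdx.L (α + β) (i + j + 1)) +
        (if α + β = 0 ∧ i = 0 ∧ j = 0 then ((α : ℂ) ^ 3 - (α : ℂ)) / 12
          else 0) • bas WhatIdx.C)
    (hC : ∀ x : Lg, ⁅bas WhatIdx.C, x⁆ = 0)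
    (a : G × ℕ →₀ ℂ)
    (mul : Lg →ₗ[ℂ] Lg →ₗ[ℂ] Lg)
    (hmulLL : ∀ (α β : G) (i j : ℕ),
      mul (bas (WhatIdx.L α i)) (bas (WhatIdx.L β j)) =
        a.sum (fun p c => c • bas (WhatIdx.L (p.1 + α + β) (p.2 + i + j + 1))))
    (hmulCL : ∀ (α : G) (i : ℕ), mul (bas WhatIdx.C) (bas (WhatIdx.L α i)) = 0)
    (hmulLC : ∀ (α : G) (i : ℕ), mul (bas (WhatIdx.L α i)) (bas WhatIdx.C) = 0)
    (hmulCC : mul (bas WhatIdx.C) (bas WhatIdx.C) = 0) :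
    (∀ x y : Lg, mul x y = mul y x) ∧
    (∀ x y z : Lg, mul (mul x y) z = mul x (mul y z)) ∧
    (∀ x y z : Lg,
      (2 : ℂ) • mul z ⁅x, y⁆ = ⁅mul z x, y⁆ + ⁅x, mul z y⁆) ∧
    (a ≠ 0 → ∃ x y z : Lg, ⁅x, mul y z⁆ ≠ mul ⁅x, y⁆ z + mul y ⁅x, z⁆) :=
  transposedPoisson_What_construction_general G Lg bas hLL hC a mul hmulLL hmulCL hmulLC hmulCC
end
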